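/- Let n ≥ 3 and let λ be a partition of n with a_k parts equal to k. Over the conjugacy class C_λ, the second moment of the excedance statistic satisfies E_λ[exc²] = (n−a_1)²/4 + (n−a_1)/4 − (n−a_1+a_2)/6, and consequently the variance satisfies Var_λ[exc] = E_λ[exc²] − (E_λ[exc])² = (n − a_1 − 2a_2)/12. -/

import Mathlib

/-- The conjugacy class of `S_n` consisting of permutations of cycle type `lam`
(Mathlib's `cycleType` omits fixed points, so we compare with the parts of `lam` not equal
to `1`). -/
noncomputable def conjClass (n : ℕ) (lam : n.Partition) : Finset (Equiv.Perm (Fin n)) :=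
  Finset.univ.filter fun ω => ω.cycleType = Multiset.filter (fun i => i ≠ 1) lam.parts

/-- The number of excedances of a permutation: indices `i` with `ω i > i`. -/
def exc {n : ℕ} (ω : Equiv.Perm (Fin n)) : ℕ :=
  (Finset.univ.filter fun i : Fin n => i < ω i).card

/-!
Averaging over a conjugacy class is the same as averaging `exc (σ * ω * σ⁻¹)` over all
relabellings `σ ∈ S_n` of one fixed `ω` in the class, and `exc (σ * ω * σ⁻¹)` counts the points `a`
with `σ a < σ (ω a)`. Both moments therefore reduce to the proportion of permutations putting
two, three or four given points in a given order: `1/2`, `1/6` and `1/4`. In the second moment a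
pair `(a, b)` of non-fixed points contributes according to whether `a = b`, `b = ω a`, `a = ω b`,
or both (a `2`-cycle), and the points lying in `2`-cycles number `2 a₂`.
-/

open Finset Equiv

namespace Equiv.Perm

section Relabel

variable {α : Type*} [Fintype α] [LinearOrder α] {a b c d : α}

lemma card_filter_mul_right (p : Perm α → Prop) [DecidablePred p] (τ : Perm α) :
    #{σ | p (σ * τ)} = #{σ | p σ} :=
  card_equiv (Equiv.mulRight τ) (by simp)

lemma card_filter_and_lt_add_card_filter_and_gt (p : Perm α → Prop) [DecidablePred p]
    (hab : a ≠ b) : #{σ | p σ ∧ σ a < σ b} + #{σ | p σ ∧ σ b < σ a} = #{σ | p σ} := by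
  rw [← card_filter_add_card_filter_not (s := {σ | p σ}) (fun σ => σ a < σ b),
    filter_filter, filter_filter]
  congr 2
  ext σ
  have := σ.injective.ne hab
  simp only [mem_filter, mem_univ, true_and, not_lt]
  constructor <;> rintro ⟨hp, h⟩ <;> exact ⟨hp, by order⟩

lemma two_mul_card_filter_lt (hab : a ≠ b) :
    2 * #{σ : Perm α | σ a < σ b} = Fintype.card (Perm α) := by
  have hswap : #{σ : Perm α | σ b < σ a} = #{σ : Perm α | σ a < σ b} := by
    simpa using card_filter_mul_right (fun σ : Perm α => σ a < σ b) (swap a b)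
  have hsplit := card_filter_and_lt_add_card_filter_and_gt (fun _ => True) hab
  simp only [true_and, filter_true_of_mem fun _ _ => trivial, card_univ] at hsplit
  omega

lemma six_mul_card_filter_lt_lt (hab : a ≠ b) (hac : a ≠ c) (hbc : b ≠ c) :
    6 * #{σ : Perm α | σ a < σ b ∧ σ b < σ c} = Fintype.card (Perm α) := by
  have hacb : #{σ : Perm α | σ a < σ c ∧ σ c < σ b} = #{σ : Perm α | σ a < σ b ∧ σ b < σ c} := by
    simpa [swap_apply_of_ne_of_ne hab hac] using
      card_filter_mul_right (fun σ : Perm α => σ a < σ b ∧ σ b < σ c) (swap b c)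
  have hcab : #{σ : Perm α | σ c < σ a ∧ σ a < σ b} = #{σ : Perm α | σ a < σ b ∧ σ b < σ c} := by
    simpa [swap_apply_of_ne_of_ne hac.symm hbc.symm, swap_apply_of_ne_of_ne hab.symm hbc] using
      card_filter_mul_right (fun σ : Perm α => σ a < σ b ∧ σ b < σ c) (swap a b * swap a c)
  have hsplit : #{σ : Perm α | σ a < σ b ∧ σ b < σ c} + #{σ : Perm α | σ a < σ c ∧ σ c < σ b}
      + #{σ : Perm α | σ c < σ a ∧ σ a < σ b} = #{σ : Perm α | σ a < σ b} := by
    rw [← card_filter_and_lt_add_card_filter_and_gt (fun σ => σ a < σ b) hbc, add_assoc,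
      ← card_filter_and_lt_add_card_filter_and_gt (fun σ => σ a < σ b ∧ σ c < σ b) hac]
    congr 3 <;> ext σ <;> simp only [mem_filter, mem_univ, true_and] <;> grind
  have := two_mul_card_filter_lt (α := α) hab
  omega

lemma four_mul_card_filter_lt_and_lt (hab : a ≠ b) (hcd : c ≠ d) (hac : a ≠ c) (had : a ≠ d)
    (hbc : b ≠ c) (hbd : b ≠ d) :
    4 * #{σ : Perm α | σ a < σ b ∧ σ c < σ d} = Fintype.card (Perm α) := by
  have hswap : #{σ : Perm α | σ a < σ b ∧ σ d < σ c} = #{σ : Perm α | σ a < σ b ∧ σ c < σ d} := by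
    simpa [swap_apply_of_ne_of_ne hac had, swap_apply_of_ne_of_ne hbc hbd] using
      card_filter_mul_right (fun σ : Perm α => σ a < σ b ∧ σ c < σ d) (swap c d)
  have hsplit := card_filter_and_lt_add_card_filter_and_gt (fun σ : Perm α => σ a < σ b) hcd
  have := two_mul_card_filter_lt (α := α) hab
  omega

end Relabel

section CycleType

variable {α : Type*} [Fintype α] [DecidableEq α]

lemma apply_apply_eq_self_iff_card_support_cycleOf {ω : Perm α} {a : α} (ha : ω a ≠ a) :
    ω (ω a) = a ↔ #(ω.cycleOf a).support = 2 := by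
  have hc := isCycle_cycleOf ω ha
  have h2 : 2 ≤ #(ω.cycleOf a).support := two_le_card_support_cycleOf_iff.2 ha
  rw [← mul_apply, ← sq, ← cycleOf_pow_apply_self, ← hc.pow_eq_one_iff' (by simpa using ha),
    ← orderOf_dvd_iff_pow_eq_one, hc.orderOf]
  exact ⟨fun h => le_antisymm (Nat.le_of_dvd two_pos h) h2, fun h => h ▸ dvd_rfl⟩

lemma card_filter_card_support_cycleOf_eq (ω : Perm α) (k : ℕ) :
    #{a ∈ ω.support | #(ω.cycleOf a).support = k} = k * ω.cycleType.count k := by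
  have hunion : {a ∈ ω.support | #(ω.cycleOf a).support = k}
      = {c ∈ ω.cycleFactorsFinset | #c.support = k}.biUnion support := by
    ext a
    simp only [mem_filter, mem_biUnion]
    constructor
    · rintro ⟨ha, hk⟩
      exact ⟨ω.cycleOf a, ⟨cycleOf_mem_cycleFactorsFinset_iff.2 ha, hk⟩,
        mem_support_cycleOf_iff.2 ⟨SameCycle.refl _ _, ha⟩⟩
    · rintro ⟨c, ⟨hc, hk⟩, ha⟩
      rw [← cycle_is_cycleOf ha hc]
      exact ⟨mem_cycleFactorsFinset_support_le hc ha, hk⟩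
  rw [hunion, card_biUnion fun c hc d hd hcd => (cycleFactorsFinset_pairwise_disjoint ω
      (mem_filter.1 hc).1 (mem_filter.1 hd).1 hcd).disjoint_support,
    sum_const_nat fun c hc => (mem_filter.1 hc).2, cycleType_def, Multiset.count_map, mul_comm]
  simp_rw [eq_comm (a := k)]
  rfl

lemma card_filter_apply_apply_eq_self (ω : Perm α) :
    #{a ∈ ω.support | ω (ω a) = a} = 2 * ω.cycleType.count 2 := by
  rw [← card_filter_card_support_cycleOf_eq]
  exact congrArg card (filter_congr fun a ha =>
    apply_apply_eq_self_iff_card_support_cycleOf (mem_support.1 ha))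

end CycleType

section Excedances

variable {α : Type*} [Fintype α] [LinearOrder α]

/-- The number of relabellings `σ` for which both `σ a` and `σ b` are excedances of
`σ * ω * σ⁻¹`. -/
def jointExcCount (ω : Perm α) (a b : α) : ℕ :=
  #{σ : Perm α | σ a < σ (ω a) ∧ σ b < σ (ω b)}

lemma two_mul_sum_card_filter_lt_apply (ω : Perm α) :
    2 * ∑ a, #{σ : Perm α | σ a < σ (ω a)} = #ω.support * Fintype.card (Perm α) := by
  rw [mul_sum, ← sum_subset (subset_univ ω.support), sum_congr rfl fun a ha =>
    two_mul_card_filter_lt (mem_support.1 ha).symm, sum_const, smul_eq_mul]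
  intro a _ ha
  simp [notMem_support.1 ha]

/-- The proportion is `1/2` if `a = b`, `0` on a `2`-cycle, `1/6` if otherwise `b = ω a` or
`a = ω b`, and `1/4` if `a, ω a, b, ω b` are distinct. -/
lemma twelve_mul_jointExcCount {ω : Perm α} {a b : α} (ha : ω a ≠ a) (hb : ω b ≠ b) :
    12 * (jointExcCount ω a b : ℤ) = Fintype.card (Perm α) *
      (3 + 3 * (if a = b then 1 else 0) - (if ω a = b then 1 else 0)
        - (if ω b = a then 1 else 0) - (if ω a = b ∧ ω b = a then 1 else 0)) := by
  unfold jointExcCount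
  obtain rfl | hab := eq_or_ne a b
  · have := two_mul_card_filter_lt ha.symm
    simp only [and_self, ha, if_false, if_true]
    omega
  by_cases hba : ω b = a <;> by_cases hab' : ω a = b
  · rw [hba, hab', filter_false_of_mem fun σ _ h => lt_asymm h.1 h.2]
    simp [hab]
  · have := six_mul_card_filter_lt_lt hab.symm (Ne.symm hab') ha.symm
    rw [hba, filter_congr fun σ _ => and_comm]
    simp [hab, hab']
    omega
  · have := six_mul_card_filter_lt_lt hab (Ne.symm hba) hb.symm
    rw [hab']
    simp [hab, hba]
    omega
  · have := four_mul_card_filter_lt_and_lt ha.symm hb.symm hab (Ne.symm hba) hab'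
      (ω.injective.ne hab)
    simp [hab, hba, hab']
    omega

lemma twelve_mul_sum_jointExcCount_of_apply_ne {ω : Perm α} {a : α} (ha : ω a ≠ a) :
    12 * ∑ b ∈ ω.support, (jointExcCount ω a b : ℤ)
      = Fintype.card (Perm α) * (3 * #ω.support + 1 - if ω (ω a) = a then 1 else 0) := by
  rw [mul_sum, sum_congr rfl fun b hb => twelve_mul_jointExcCount ha (mem_support.1 hb),
    ← mul_sum]
  congr 1
  have hmem : a ∈ ω.support := mem_support.2 ha
  have hpre : ∑ b ∈ ω.support, (if ω b = a then 1 else 0 : ℤ) = 1 := by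
    rw [ω.sum_comp ω.support (fun b => if b = a then 1 else 0)
      (coe_support_eq_set_support ω).ge, sum_ite_eq' _ _ _, if_pos hmem]
  simp only [sum_add_distrib, sum_sub_distrib, sum_const, ← mul_sum, ite_and, sum_ite_eq, hpre,
    hmem, apply_mem_support, if_true]
  ring

lemma twelve_mul_sum_jointExcCount (ω : Perm α) :
    12 * ∑ a, ∑ b, (jointExcCount ω a b : ℤ) = Fintype.card (Perm α) *
      (3 * #ω.support ^ 2 + #ω.support - #{a ∈ ω.support | ω (ω a) = a}) := by
  have hsupport : ∑ a, ∑ b, (jointExcCount ω a b : ℤ)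
      = ∑ a ∈ ω.support, ∑ b ∈ ω.support, (jointExcCount ω a b : ℤ) := by
    refine (sum_subset (subset_univ _) fun a _ ha => sum_eq_zero fun b _ => ?_).symm.trans
      (sum_congr rfl fun a _ => (sum_subset (subset_univ _) fun b _ hb => ?_).symm)
    · simp [jointExcCount, notMem_support.1 ha]
    · simp [jointExcCount, notMem_support.1 hb]
  rw [hsupport, mul_sum, sum_congr rfl fun a ha =>
    twelve_mul_sum_jointExcCount_of_apply_ne (mem_support.1 ha), ← mul_sum]
  simp only [sum_sub_distrib, sum_const, sum_boole]
  ring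

end Excedances

end Equiv.Perm

open Equiv.Perm

section SymmetricGroup

variable {n : ℕ}

lemma exc_conj (σ ω : Perm (Fin n)) : exc (σ * ω * σ⁻¹) = #{a | σ a < σ (ω a)} := by
  refine (card_equiv σ fun i => ?_).symm
  simp only [mem_filter, mem_univ, true_and]
  simp

lemma sum_exc_conj_eq_sum_card_filter (ω : Perm (Fin n)) :
    ∑ σ, exc (σ * ω * σ⁻¹) = ∑ a, #{σ : Perm (Fin n) | σ a < σ (ω a)} := by
  simp only [exc_conj, card_filter]
  exact sum_comm

lemma sum_exc_conj_sq_eq_sum_jointExcCount (ω : Perm (Fin n)) :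
    ∑ σ, exc (σ * ω * σ⁻¹) ^ 2 = ∑ a, ∑ b, jointExcCount ω a b := by
  simp only [exc_conj, jointExcCount, card_filter, sq, sum_mul_sum, ite_zero_mul_ite_zero, mul_one]
  rw [sum_comm]
  exact sum_congr rfl fun a _ => sum_comm

lemma sum_conjClass_conj {M : Type*} [AddCommMonoid M] (lam : n.Partition) (σ : Perm (Fin n))
    (f : Perm (Fin n) → M) :
    ∑ ω ∈ conjClass n lam, f (σ * ω * σ⁻¹) = ∑ ω ∈ conjClass n lam, f ω :=
  sum_equiv (MulAut.conj σ).toEquiv (by simp [conjClass, cycleType_conj]) (by simp)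

lemma sum_exc_conj_eq (ω : Perm (Fin n)) :
    ∑ σ, (exc (σ * ω * σ⁻¹) : ℝ) = #ω.support / 2 * Fintype.card (Perm (Fin n)) := by
  have hsum : ∑ σ, (exc (σ * ω * σ⁻¹) : ℝ) = ∑ a, (#{σ : Perm (Fin n) | σ a < σ (ω a)} : ℝ) := by
    exact_mod_cast sum_exc_conj_eq_sum_card_filter ω
  have hcount : 2 * ∑ a, (#{σ : Perm (Fin n) | σ a < σ (ω a)} : ℝ)
      = #ω.support * Fintype.card (Perm (Fin n)) := by
    exact_mod_cast two_mul_sum_card_filter_lt_apply ω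
  linarith

lemma sum_exc_conj_sq_eq (ω : Perm (Fin n)) :
    ∑ σ, (exc (σ * ω * σ⁻¹) : ℝ) ^ 2 = (3 * #ω.support ^ 2 + #ω.support
      - #{a ∈ ω.support | ω (ω a) = a}) / 12 * Fintype.card (Perm (Fin n)) := by
  have hsum : ∑ σ, (exc (σ * ω * σ⁻¹) : ℝ) ^ 2 = ∑ a, ∑ b, (jointExcCount ω a b : ℝ) := by
    exact_mod_cast sum_exc_conj_sq_eq_sum_jointExcCount ω
  have hcount := congrArg (Int.cast : ℤ → ℝ) (twelve_mul_sum_jointExcCount ω)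
  push_cast at hcount
  linarith

lemma count_one_add_sum_filter_ne_one (lam : n.Partition) :
    lam.parts.count 1 + (lam.parts.filter (· ≠ 1)).sum = n := by
  have h := congrArg Multiset.sum (Multiset.filter_add_not (· = 1) lam.parts)
  rwa [Multiset.sum_add, Multiset.filter_eq', Multiset.sum_replicate, smul_eq_mul, mul_one,
    lam.parts_sum] at h

lemma conjClass_nonempty (lam : n.Partition) : (conjClass n lam).Nonempty := by
  have hsum := count_one_add_sum_filter_ne_one lam
  have htwo : ∀ k ∈ lam.parts.filter (· ≠ 1), 2 ≤ k := fun k hk => by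
    obtain ⟨hk, hk1⟩ := Multiset.mem_filter.1 hk
    have := lam.parts_pos hk
    omega
  obtain ⟨ω, hω⟩ := (exists_with_cycleType_iff (α := Fin n)).2
    ⟨by rw [Fintype.card_fin]; omega, htwo⟩
  exact ⟨ω, by simpa [conjClass] using hω⟩

section
variable {lam : n.Partition} {ω : Perm (Fin n)}

lemma card_support_add_count_one_of_mem_conjClass (hω : ω ∈ conjClass n lam) :
    #ω.support + lam.parts.count 1 = n := by
  rw [← sum_cycleType, (mem_filter.1 hω).2, add_comm, count_one_add_sum_filter_ne_one]

lemma card_filter_apply_apply_eq_self_of_mem_conjClass (hω : ω ∈ conjClass n lam) :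
    #{a ∈ ω.support | ω (ω a) = a} = 2 * lam.parts.count 2 := by
  rw [card_filter_apply_apply_eq_self, (mem_filter.1 hω).2,
    Multiset.count_filter_of_pos (by decide)]

end

lemma sum_conjClass_div_card (lam : n.Partition) (f : Perm (Fin n) → ℝ) (c : ℝ)
    (hf : ∀ ω ∈ conjClass n lam, ∑ σ, f (σ * ω * σ⁻¹) = c * Fintype.card (Perm (Fin n))) :
    (∑ ω ∈ conjClass n lam, f ω) / #(conjClass n lam) = c := by
  have hN : (Fintype.card (Perm (Fin n)) : ℝ) ≠ 0 := by positivity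
  have hC : (#(conjClass n lam) : ℝ) ≠ 0 := by
    exact_mod_cast (conjClass_nonempty lam).card_pos.ne'
  have key : (Fintype.card (Perm (Fin n)) : ℝ) * ∑ ω ∈ conjClass n lam, f ω
      = #(conjClass n lam) * (c * Fintype.card (Perm (Fin n))) :=
    calc _ = ∑ σ : Perm (Fin n), ∑ ω ∈ conjClass n lam, f (σ * ω * σ⁻¹) := by
          simp [sum_conjClass_conj]
      _ = ∑ ω ∈ conjClass n lam, ∑ σ : Perm (Fin n), f (σ * ω * σ⁻¹) := sum_comm
      _ = _ := by rw [sum_congr rfl hf, sum_const, nsmul_eq_mul]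
  rw [div_eq_iff hC]
  exact mul_left_cancel₀ hN (by linarith)

end SymmetricGroup

theorem stmt14_general (n : ℕ) (lam : n.Partition) (a1 a2 : ℕ)
    (ha1 : a1 = Multiset.count 1 lam.parts) (ha2 : a2 = Multiset.count 2 lam.parts) :
    (∑ ω ∈ conjClass n lam, (exc ω : ℝ) ^ 2) / ((conjClass n lam).card : ℝ)
      = ((n : ℝ) - (a1 : ℝ)) ^ 2 / 4 + ((n : ℝ) - (a1 : ℝ)) / 4
        - ((n : ℝ) - (a1 : ℝ) + (a2 : ℝ)) / 6 ∧
    (∑ ω ∈ conjClass n lam, (exc ω : ℝ) ^ 2) / ((conjClass n lam).card : ℝ)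
        - ((∑ ω ∈ conjClass n lam, (exc ω : ℝ)) / ((conjClass n lam).card : ℝ)) ^ 2
      = ((n : ℝ) - (a1 : ℝ) - 2 * (a2 : ℝ)) / 12 := by
  have hsupport : ∀ ω ∈ conjClass n lam, (#ω.support : ℝ) = n - a1 := fun ω hω => by
    rw [ha1, eq_sub_iff_add_eq]
    exact_mod_cast card_support_add_count_one_of_mem_conjClass hω
  have htwoCycles : ∀ ω ∈ conjClass n lam, (#{a ∈ ω.support | ω (ω a) = a} : ℝ) = 2 * a2 :=
    fun ω hω => by
      rw [ha2]
      exact_mod_cast card_filter_apply_apply_eq_self_of_mem_conjClass hω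
  have hE1 := sum_conjClass_div_card lam (fun ω => (exc ω : ℝ)) ((n - a1) / 2) fun ω hω => by
    rw [sum_exc_conj_eq, hsupport ω hω]
  have hE2 := sum_conjClass_div_card lam (fun ω => (exc ω : ℝ) ^ 2)
    ((3 * (n - a1) ^ 2 + (n - a1) - 2 * a2) / 12) fun ω hω => by
      rw [sum_exc_conj_sq_eq, hsupport ω hω, htwoCycles ω hω]
  rw [hE2, hE1]
  constructor <;> ring

theorem stmt14 (n : ℕ) (hn : 3 ≤ n) (lam : n.Partition) (a1 a2 : ℕ)
    (ha1 : a1 = Multiset.count 1 lam.parts) (ha2 : a2 = Multiset.count 2 lam.parts) :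
    (∑ ω ∈ conjClass n lam, (exc ω : ℝ) ^ 2) / ((conjClass n lam).card : ℝ)
      = ((n : ℝ) - (a1 : ℝ)) ^ 2 / 4 + ((n : ℝ) - (a1 : ℝ)) / 4
        - ((n : ℝ) - (a1 : ℝ) + (a2 : ℝ)) / 6 ∧
    (∑ ω ∈ conjClass n lam, (exc ω : ℝ) ^ 2) / ((conjClass n lam).card : ℝ)
        - ((∑ ω ∈ conjClass n lam, (exc ω : ℝ)) / ((conjClass n lam).card : ℝ)) ^ 2
      = ((n : ℝ) - (a1 : ℝ) - 2 * (a2 : ℝ)) / 12 :=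
  stmt14_general n lam a1 a2 ha1 ha2
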